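/- arXiv:2202.00305 — 2 statements merged into one kernel-verified Lean document; each statement's English description precedes it below -/
import Mathlib

section
/- Let G be a Lie algebra, θ : G → V an isomorphism of right G-modules where V is a right G-module, and let L = G ⋉ V be the associated Leibniz algebra. Suppose Δ : L → L is a local derivation with Δ(L) ⊆ V, where every derivation of L has the form R_a + ωθ + λπ with π : V → V the identity G-module endomorphism scaled (i.e., derivations mapping into V are of the form x + v ↦ ωθ(x) + λv). Then Δ itself has the form Δ(x+v) = ωθ(x) + λv for fixed scalars ω, λ, and hence Δ is a derivation. -/
/-! An arbitrary derivation `D` of `L = G ⋉ V` need not map into `V`, but it yields two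
`V`-valued derivations, `(g, v) ↦ θ (D (0, v)).1` and `(g, v) ↦ (D (g, v)).2 - θ (D (θ⁻¹ v, 0)).1`,
to which the hypothesis applies. Hence `(D (g, 0)).2` is a multiple of `θ g`, and `(D (θ⁻¹ v, v)).2`
is a multiple of `v` as soon as `(D (θ⁻¹ v, v)).1 = 0`. Since `Δ` agrees pointwise with derivations
and maps into `V`, the maps `θ⁻¹ v ↦ (Δ (θ⁻¹ v, 0)).2` and `v ↦ (Δ (0, v)).2` send every vector to a
multiple of itself, so they are homotheties; the resulting form of `Δ` is visibly a derivation. -/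

theorem LinearMap.exists_forall_apply_eq_smul_of_forall_exists {F M : Type*} [Field F]
    [AddCommGroup M] [Module F M] (f : M →ₗ[F] M) (h : ∀ x, ∃ c : F, f x = c • x) :
    ∃ c : F, ∀ x, f x = c • x := by
  obtain ⟨c, hc⟩ := f.exists_eq_smul_id_of_forall_notLinearIndependent fun x hx => by
    obtain ⟨c, hc⟩ := h x
    have := LinearIndependent.pair_iff.mp hx c (-1) (by rw [hc, neg_one_smul, add_neg_cancel])
    exact one_ne_zero (neg_eq_zero.mp this.2)
  exact ⟨c, fun x => by simp [hc]⟩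

theorem LinearMap.apply_eq_apply_inl_add_apply_inr {R M N P : Type*} [Semiring R]
    [AddCommMonoid M] [AddCommMonoid N] [AddCommMonoid P] [Module R M] [Module R N] [Module R P]
    (f : M × N →ₗ[R] P) (x : M × N) : f x = f (x.1, 0) + f (0, x.2) := by
  rw [← map_add, Prod.mk_add_mk, add_zero, zero_add]

section LeibnizSemidirect

variable {F G V : Type*} [Field F] [LieRing G] [LieAlgebra F G] [AddCommGroup V] [Module F V]

def leibnizBracket (ρ : V →ₗ[F] G →ₗ[F] V) (p q : G × V) : G × V :=
  (⁅p.1, q.1⁆, ρ p.2 q.1)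

def IsLeibnizDerivation (ρ : V →ₗ[F] G →ₗ[F] V) (D : G × V →ₗ[F] G × V) : Prop :=
  ∀ a b, D (leibnizBracket ρ a b) = leibnizBracket ρ (D a) b + leibnizBracket ρ a (D b)

def IsLocalLeibnizDerivation (ρ : V →ₗ[F] G →ₗ[F] V) (Δ : G × V →ₗ[F] G × V) : Prop :=
  ∀ x, ∃ D, IsLeibnizDerivation ρ D ∧ Δ x = D x

def HasStandardForm (θ : G ≃ₗ[F] V) (D : G × V →ₗ[F] G × V) : Prop :=
  ∃ ω lam : F, ∀ g v, D (g, v) = ((0 : G), ω • θ g + lam • v)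

def ModuleValuedDerivationsHaveStandardForm (ρ : V →ₗ[F] G →ₗ[F] V) (θ : G ≃ₗ[F] V) : Prop :=
  ∀ D, IsLeibnizDerivation ρ D → (∀ x, (D x).1 = 0) → HasStandardForm θ D

variable {ρ : V →ₗ[F] G →ₗ[F] V} {θ : G ≃ₗ[F] V} {D : G × V →ₗ[F] G × V}

namespace IsLeibnizDerivation

theorem apply_lie_inl (hD : IsLeibnizDerivation ρ D) (x y : G) :
    D (⁅x, y⁆, 0) = (⁅(D (x, 0)).1, y⁆ + ⁅x, (D (y, 0)).1⁆, ρ (D (x, 0)).2 y) := by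
  simpa [leibnizBracket] using hD (x, 0) (y, 0)

theorem apply_inr_rho (hD : IsLeibnizDerivation ρ D) (v : V) (y : G) :
    D (0, ρ v y) = (⁅(D (0, v)).1, y⁆, ρ (D (0, v)).2 y + ρ v (D (y, 0)).1) := by
  simpa [leibnizBracket] using hD (0, v) (y, 0)

end IsLeibnizDerivation

def transferFstInr (θ : G ≃ₗ[F] V) (D : G × V →ₗ[F] G × V) : G × V →ₗ[F] G × V :=
  .inr F G V ∘ₗ θ.toLinearMap ∘ₗ .fst F G V ∘ₗ D ∘ₗ .inr F G V ∘ₗ .snd F G V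

-- The correction cancels the term `ρ v (D (y, 0)).1` of `D (0, ρ v y)`, using `ρ v y = θ ⁅θ⁻¹ v, y⁆`.
def correctedSnd (θ : G ≃ₗ[F] V) (D : G × V →ₗ[F] G × V) : G × V →ₗ[F] G × V :=
  .inr F G V ∘ₗ (.snd F G V ∘ₗ D -
    θ.toLinearMap ∘ₗ .fst F G V ∘ₗ D ∘ₗ .inl F G V ∘ₗ θ.symm.toLinearMap ∘ₗ .snd F G V)

theorem transferFstInr_apply (p : G × V) :
    transferFstInr θ D p = (0, θ (D (0, p.2)).1) := rfl

theorem correctedSnd_apply (p : G × V) :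
    correctedSnd θ D p = (0, (D p).2 - θ (D (θ.symm p.2, 0)).1) := rfl

theorem isLeibnizDerivation_transferFstInr (hθ : ∀ x y : G, θ ⁅x, y⁆ = ρ (θ x) y)
    (hD : IsLeibnizDerivation ρ D) : IsLeibnizDerivation ρ (transferFstInr θ D) := by
  intro a b
  simp [transferFstInr_apply, leibnizBracket, hD.apply_inr_rho, hθ]

theorem isLeibnizDerivation_correctedSnd (hθ : ∀ x y : G, θ ⁅x, y⁆ = ρ (θ x) y)
    (hD : IsLeibnizDerivation ρ D) : IsLeibnizDerivation ρ (correctedSnd θ D) := by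
  intro a b
  have hsymm : θ.symm (ρ a.2 b.1) = ⁅θ.symm a.2, b.1⁆ := by
    rw [θ.symm_apply_eq, hθ, θ.apply_symm_apply]
  have hsplit : leibnizBracket ρ a b = (⁅a.1, b.1⁆, 0) + (0, ρ a.2 b.1) := by
    simp [leibnizBracket]
  rw [hsplit, map_add]
  simp only [correctedSnd_apply, leibnizBracket, D.apply_eq_apply_inl_add_apply_inr a, hsymm,
    hD.apply_lie_inl, hD.apply_inr_rho, map_add, hθ, θ.apply_symm_apply]
  refine Prod.ext (by simp) ?_
  simp only [map_zero, ← Prod.zero_eq_mk, Prod.fst_zero, sub_zero, add_sub_add_right_eq_sub,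
    Prod.mk_add_mk, add_zero, zero_lie, Prod.snd_add, map_sub, map_add, LinearMap.sub_apply,
    LinearMap.add_apply, lie_zero]
  abel

theorem IsLeibnizDerivation.exists_fst_apply_inr (hθ : ∀ x y : G, θ ⁅x, y⁆ = ρ (θ x) y)
    (hstd : ModuleValuedDerivationsHaveStandardForm ρ θ) (hD : IsLeibnizDerivation ρ D) :
    ∃ μ : F, ∀ v, (D (0, v)).1 = μ • θ.symm v := by
  obtain ⟨_, μ, hμ⟩ := hstd _ (isLeibnizDerivation_transferFstInr hθ hD) fun p => rfl
  refine ⟨μ, fun v => ?_⟩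
  have := congrArg Prod.snd (hμ 0 v)
  simp only [transferFstInr_apply, map_zero, smul_zero, zero_add] at this
  rw [← θ.symm_apply_apply (D (0, v)).1, this, map_smul]

theorem IsLeibnizDerivation.exists_snd_apply (hθ : ∀ x y : G, θ ⁅x, y⁆ = ρ (θ x) y)
    (hstd : ModuleValuedDerivationsHaveStandardForm ρ θ) (hD : IsLeibnizDerivation ρ D) :
    ∃ ω lam : F, ∀ g v, (D (g, v)).2 = ω • θ g + lam • v + θ (D (θ.symm v, 0)).1 := by
  obtain ⟨ω, lam, h⟩ := hstd _ (isLeibnizDerivation_correctedSnd hθ hD) fun p => rfl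
  refine ⟨ω, lam, fun g v => ?_⟩
  rw [← sub_eq_iff_eq_add]
  exact congrArg Prod.snd (h g v)

theorem IsLeibnizDerivation.exists_snd_apply_symm_eq_smul
    (hθ : ∀ x y : G, θ ⁅x, y⁆ = ρ (θ x) y) (hstd : ModuleValuedDerivationsHaveStandardForm ρ θ)
    (hD : IsLeibnizDerivation ρ D) (v : V) (hv : (D (θ.symm v, v)).1 = 0) :
    ∃ c : F, (D (θ.symm v, v)).2 = c • v := by
  obtain ⟨μ, hμ⟩ := hD.exists_fst_apply_inr hθ hstd
  obtain ⟨ω, lam, hsnd⟩ := hD.exists_snd_apply hθ hstd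
  have hfst : (D (θ.symm v, 0)).1 = -(μ • θ.symm v) := by
    rw [D.apply_eq_apply_inl_add_apply_inr, Prod.fst_add, hμ] at hv
    exact eq_neg_of_add_eq_zero_left hv
  refine ⟨ω + lam - μ, ?_⟩
  rw [hsnd, hfst, θ.apply_symm_apply, map_neg, map_smul, θ.apply_symm_apply, sub_smul, add_smul,
    sub_eq_add_neg]

theorem IsLocalLeibnizDerivation.hasStandardForm (hθ : ∀ x y : G, θ ⁅x, y⁆ = ρ (θ x) y)
    (hstd : ModuleValuedDerivationsHaveStandardForm ρ θ) {Δ : G × V →ₗ[F] G × V}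
    (hΔ : IsLocalLeibnizDerivation ρ Δ) (hrange : ∀ x, (Δ x).1 = 0) : HasStandardForm θ Δ := by
  obtain ⟨ω, hω⟩ : ∃ ω : F, ∀ v, (Δ (θ.symm v, 0)).2 = ω • v :=
    LinearMap.exists_forall_apply_eq_smul_of_forall_exists
      (.snd F G V ∘ₗ Δ ∘ₗ .inl F G V ∘ₗ θ.symm.toLinearMap) fun v => by
        obtain ⟨D, hD, hΔD⟩ := hΔ (θ.symm v, 0)
        obtain ⟨ω, lam, hsnd⟩ := hD.exists_snd_apply hθ hstd
        exact ⟨ω, by simp [hΔD, hsnd, ← Prod.zero_eq_mk]⟩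
  obtain ⟨lam, hlam⟩ : ∃ lam : F, ∀ v, (Δ (0, v)).2 = lam • v :=
    LinearMap.exists_forall_apply_eq_smul_of_forall_exists
      (.snd F G V ∘ₗ Δ ∘ₗ .inr F G V) fun v => by
        obtain ⟨D, hD, hΔD⟩ := hΔ (θ.symm v, v)
        obtain ⟨c, hc⟩ := hD.exists_snd_apply_symm_eq_smul hθ hstd v (hΔD ▸ hrange _)
        refine ⟨c - ω, ?_⟩
        have := congrArg Prod.snd (Δ.apply_eq_apply_inl_add_apply_inr (θ.symm v, v))
        simp only [Prod.snd_add, hΔD, hc, hω] at this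
        simp [sub_smul, this]
  refine ⟨ω, lam, fun g v => Prod.ext (hrange _) ?_⟩
  rw [Δ.apply_eq_apply_inl_add_apply_inr, Prod.snd_add, hlam, ← hω, θ.symm_apply_apply]

theorem HasStandardForm.isLeibnizDerivation (hθ : ∀ x y : G, θ ⁅x, y⁆ = ρ (θ x) y)
    (hD : HasStandardForm θ D) : IsLeibnizDerivation ρ D := by
  obtain ⟨ω, lam, hD⟩ := hD
  intro a b
  simp [leibnizBracket, hD, hθ]

end LeibnizSemidirect

theorem local_derivation_into_module_isomorphic_case_general (F : Type*) [Field F]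
    (G : Type*) [LieRing G] [LieAlgebra F G] (V : Type*) [AddCommGroup V] [Module F V]
    (ρ : V →ₗ[F] G →ₗ[F] V)
    (θ : G ≃ₗ[F] V) (hθ : ∀ x y : G, θ ⁅x, y⁆ = ρ (θ x) y)
    (B : G × V → G × V → G × V)
    (hB : ∀ p q : G × V, B p q = (⁅p.1, q.1⁆, ρ p.2 q.1))
    (hder : ∀ D : G × V →ₗ[F] G × V,
      (∀ a b : G × V, D (B a b) = B (D a) b + B a (D b)) → (∀ x : G × V, (D x).1 = 0) →
      ∃ ω lam : F, ∀ (g : G) (v : V), D (g, v) = ((0 : G), ω • θ g + lam • v))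
    (Δ : G × V →ₗ[F] G × V)
    (hloc : ∀ x : G × V, ∃ D : G × V →ₗ[F] G × V,
      (∀ a b : G × V, D (B a b) = B (D a) b + B a (D b)) ∧ Δ x = D x)
    (hrange : ∀ x : G × V, (Δ x).1 = 0) :
    (∃ ω lam : F, ∀ (g : G) (v : V), Δ (g, v) = ((0 : G), ω • θ g + lam • v)) ∧
      ∀ a b : G × V, Δ (B a b) = B (Δ a) b + B a (Δ b) := by
  obtain rfl : B = leibnizBracket ρ := funext₂ hB
  have hstd : HasStandardForm θ Δ := IsLocalLeibnizDerivation.hasStandardForm hθ hder hloc hrange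
  exact ⟨hstd, hstd.isLeibnizDerivation hθ⟩

/-- Let `L = G ⋉ V` with `θ : G → V` an isomorphism of right `G`-modules, and
suppose every derivation of `L` mapping `L` into `V` has the form
`x + v ↦ ω θ(x) + λ v`.  If `Δ` is a local derivation of `L` with `Δ(L) ⊆ V`,
then `Δ` itself has the form `Δ(x + v) = ω θ(x) + λ v` for fixed scalars `ω, λ`,
and hence `Δ` is a derivation. -/
theorem local_derivation_into_module_isomorphic_case (F : Type*) [Field F]
    (G : Type*) [LieRing G] [LieAlgebra F G] (V : Type*) [AddCommGroup V] [Module F V]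
    (ρ : V →ₗ[F] G →ₗ[F] V)
    (hmod : ∀ (v : V) (g h : G), ρ v ⁅g, h⁆ = ρ (ρ v g) h - ρ (ρ v h) g)
    (θ : G ≃ₗ[F] V) (hθ : ∀ x y : G, θ ⁅x, y⁆ = ρ (θ x) y)
    (B : G × V → G × V → G × V)
    (hB : ∀ p q : G × V, B p q = (⁅p.1, q.1⁆, ρ p.2 q.1))
    (hder : ∀ D : G × V →ₗ[F] G × V,
      (∀ a b : G × V, D (B a b) = B (D a) b + B a (D b)) → (∀ x : G × V, (D x).1 = 0) →
      ∃ ω lam : F, ∀ (g : G) (v : V), D (g, v) = ((0 : G), ω • θ g + lam • v))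
    (Δ : G × V →ₗ[F] G × V)
    (hloc : ∀ x : G × V, ∃ D : G × V →ₗ[F] G × V,
      (∀ a b : G × V, D (B a b) = B (D a) b + B a (D b)) ∧ Δ x = D x)
    (hrange : ∀ x : G × V, (Δ x).1 = 0) :
    (∃ ω lam : F, ∀ (g : G) (v : V), Δ (g, v) = ((0 : G), ω • θ g + lam • v)) ∧
      ∀ a b : G × V, Δ (B a b) = B (Δ a) b + B a (Δ b) :=
  local_derivation_into_module_isomorphic_case_general F G V ρ θ hθ B hB hder Δ hloc hrange
end

section
/- Let L = S ⋉ V be a Leibniz algebra where S is a Lie algebra acting on the module V, and suppose every derivation of L restricted to S has the form x ↦ [x, a] + (element of V). If Δ is a local derivation of L, then the map x ∈ S ↦ pr_S(Δ(x)) ∈ S is a local derivation of the Lie algebra S. -/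
/-! Take a derivation `D` of `L` agreeing with `Δ` at `(x, 0)`. By hypothesis
`pr_S ∘ D` restricted to `S` is `y ↦ ⁅y, a⁆` for some `a : S`, and this right
multiplication is a derivation of the Lie algebra `S` (`LieDerivation.inner`). -/

theorem projection_of_local_derivation_general (F : Type*) [Field F]
    (S : Type*) [LieRing S] [LieAlgebra F S] (V : Type*) [AddCommGroup V] [Module F V]
    (B : S × V → S × V → S × V)
    (hres : ∀ D : S × V →ₗ[F] S × V,
      (∀ a b : S × V, D (B a b) = B (D a) b + B a (D b)) →
      ∃ a : S, ∀ x : S, (D (x, (0 : V))).1 = ⁅x, a⁆)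
    (Δ : S × V →ₗ[F] S × V)
    (hloc : ∀ x : S × V, ∃ D : S × V →ₗ[F] S × V,
      (∀ a b : S × V, D (B a b) = B (D a) b + B a (D b)) ∧ Δ x = D x) :
    ∀ x : S, ∃ D : S →ₗ[F] S,
      (∀ a b : S, D ⁅a, b⁆ = ⁅D a, b⁆ + ⁅a, D b⁆) ∧ (Δ (x, (0 : V))).1 = D x := by
  intro x
  obtain ⟨D, hD, hΔx⟩ := hloc (x, 0)
  obtain ⟨a, hDa⟩ := hres D hD
  refine ⟨LieDerivation.inner F S S a, fun p q => ?_, by rw [hΔx, hDa x]; rfl⟩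
  rw [LieDerivation.coeFn_coe, LieDerivation.apply_lie_eq_add, add_comm]

/-- Let `L = S ⋉ V` be a Leibniz algebra, and suppose every derivation of `L`
restricted to `S` has the form `x ↦ [x, a] + (element of V)`.  If `Δ` is a local
derivation of `L`, then `x ↦ pr_S (Δ (x, 0))` is a local derivation of the Lie
algebra `S`. -/
theorem projection_of_local_derivation (F : Type*) [Field F]
    (S : Type*) [LieRing S] [LieAlgebra F S] (V : Type*) [AddCommGroup V] [Module F V]
    (ρ : V →ₗ[F] S →ₗ[F] V)
    (hmod : ∀ (v : V) (g h : S), ρ v ⁅g, h⁆ = ρ (ρ v g) h - ρ (ρ v h) g)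
    (B : S × V → S × V → S × V)
    (hB : ∀ p q : S × V, B p q = (⁅p.1, q.1⁆, ρ p.2 q.1))
    (hres : ∀ D : S × V →ₗ[F] S × V,
      (∀ a b : S × V, D (B a b) = B (D a) b + B a (D b)) →
      ∃ a : S, ∀ x : S, (D (x, (0 : V))).1 = ⁅x, a⁆)
    (Δ : S × V →ₗ[F] S × V)
    (hloc : ∀ x : S × V, ∃ D : S × V →ₗ[F] S × V,
      (∀ a b : S × V, D (B a b) = B (D a) b + B a (D b)) ∧ Δ x = D x) :
    ∀ x : S, ∃ D : S →ₗ[F] S,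
      (∀ a b : S, D ⁅a, b⁆ = ⁅D a, b⁆ + ⁅a, D b⁆) ∧ (Δ (x, (0 : V))).1 = D x :=
  projection_of_local_derivation_general F S V B hres Δ hloc
end
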